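/- Let F : ℝ → ℝ be strictly convex and differentiable, and let B_F(p:q) := F(p) − F(q) − (p − q)·F'(q). Let x_1, ..., x_n be reals (n ≥ 1) with positive weights w_1, ..., w_n, W := Σ_l w_l, and μ := (Σ_l w_l x_l)/W the weighted mean. Then the minimum over q ∈ ℝ of Σ_l w_l·B_F(x_l : q) is attained at q = μ and equals W·(μ·F'(μ) − F(μ)) + Σ_l w_l·F(x_l) − F'(μ)·Σ_l w_l·x_l. -/

import Mathlib

/-!
Expanding the divergence shows that `q ↦ ∑ wₗ B_F(xₗ : q)` depends on the points only through
`∑ wₗ`, `∑ wₗ xₗ` and `∑ wₗ F(xₗ)`, which gives the closed form at `q = μ` and the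
compensation identity `∑ wₗ B_F(xₗ : q) = ∑ wₗ B_F(xₗ : μ) + W · B_F(μ : q)`.
Minimality at `μ` follows, because `B_F ≥ 0` is the tangent-line inequality for convex `F`.
-/

/-- The Bregman divergence `B_F(p:q) = F(p) − F(q) − (p − q)·F'(q)`. -/
noncomputable def breg (F : ℝ → ℝ) (p q : ℝ) : ℝ :=
  F p - F q - (p - q) * deriv F q

lemma breg_nonneg {F : ℝ → ℝ} {S : Set ℝ} (hF : ConvexOn ℝ S F) {p q : ℝ} (hp : p ∈ S)
    (hq : q ∈ S) (hFq : DifferentiableAt ℝ F q) : 0 ≤ breg F p q := by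
  rw [breg]
  rcases lt_trichotomy p q with hpq | rfl | hqp
  · have h := hF.slope_le_deriv hp hq hpq hFq
    rw [slope_def_field, div_le_iff₀ (sub_pos.mpr hpq)] at h
    linarith
  · simp
  · have h := hF.deriv_le_slope hq hp hqp hFq
    rw [slope_def_field, le_div_iff₀ (sub_pos.mpr hqp)] at h
    linarith

section WeightedSum

variable {ι : Type*} (s : Finset ι) (w x : ι → ℝ) (F : ℝ → ℝ)

lemma sum_mul_breg (q : ℝ) :
    ∑ i ∈ s, w i * breg F (x i) q =
      ∑ i ∈ s, w i * F (x i) - (∑ i ∈ s, w i) * F q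
        - (∑ i ∈ s, w i * x i - (∑ i ∈ s, w i) * q) * deriv F q := by
  simp only [Finset.sum_mul, ← Finset.sum_sub_distrib]
  exact Finset.sum_congr rfl fun i _ => by rw [breg]; ring

lemma sum_mul_breg_eq_add {μ : ℝ} (hμ : ∑ i ∈ s, w i * x i = (∑ i ∈ s, w i) * μ) (q : ℝ) :
    ∑ i ∈ s, w i * breg F (x i) q =
      ∑ i ∈ s, w i * breg F (x i) μ + (∑ i ∈ s, w i) * breg F μ q := by
  rw [sum_mul_breg, sum_mul_breg, hμ, breg]
  ring

end WeightedSum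

theorem stmt6 (F : ℝ → ℝ) (hF : StrictConvexOn ℝ Set.univ F)
    (hFd : Differentiable ℝ F)
    (n : ℕ) (hn : 1 ≤ n) (x w : Fin n → ℝ) (hw : ∀ l, 0 < w l)
    (W μ : ℝ) (hW : W = ∑ l, w l) (hμ : μ = (∑ l, w l * x l) / W) :
    (∀ q : ℝ, (∑ l, w l * breg F (x l) μ) ≤ (∑ l, w l * breg F (x l) q)) ∧
    (∑ l, w l * breg F (x l) μ) =
      W * (μ * deriv F μ - F μ) + (∑ l, w l * F (x l))
        - deriv F μ * (∑ l, w l * x l) := by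
  have hWpos : 0 < W := hW ▸ Finset.sum_pos (fun l _ => hw l) ⟨⟨0, hn⟩, Finset.mem_univ _⟩
  have hmean : ∑ l, w l * x l = W * μ := by rw [hμ, mul_div_cancel₀ _ hWpos.ne']
  subst hW
  refine ⟨fun q => ?_, ?_⟩
  · rw [sum_mul_breg_eq_add _ w x F hmean q]
    exact le_add_of_nonneg_right <|
      mul_nonneg hWpos.le (breg_nonneg hF.convexOn trivial trivial (hFd q))
  · rw [sum_mul_breg]
    ring
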